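/- arXiv:1801.02695 — 4 statements merged into one kernel-verified Lean document; each statement's English description precedes it below -/
import Mathlib

section
/- There exist positive constants θ₂, θ₃ such that for all n sufficiently large, P(TSP_n ≥ θ₂√n) ≥ 1 − exp(−θ₃ n / log n). -/
open MeasureTheory ProbabilityTheory Filter Finset
open scoped ENNReal Classical

noncomputable section

/-- Length of the closed tour visiting the points of `l` in cyclic order. -/
def tourLength (l : List (ℝ × ℝ)) : ℝ :=
  ((l.zip (l.rotate 1)).map fun p => dist p.1 p.2).sum

/-- TSP length of a finite set of points in the plane: the minimum over spanning cycles
(cyclic orderings of the points) of the total edge length; `0` if there are at most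
two points. -/
def tspLength (P : Finset (ℝ × ℝ)) : ℝ :=
  if P.card ≤ 2 then 0
  else sInf {L : ℝ | ∃ l : List (ℝ × ℝ), l.Nodup ∧ l.toFinset = P ∧ L = tourLength l}

/-- Axis-parallel square with lower-left corner `c` and side length `r`. -/
def square (c : ℝ × ℝ) (r : ℝ) : Set (ℝ × ℝ) := Set.Icc c (c.1 + r, c.2 + r)

def unitSquare : Set (ℝ × ℝ) := square (0, 0) 1

/-!
Take an `m × m` grid with `m ≍ √n` and, in each grid square of side `1 / m`, the lower-left
subsquare of side `1 / (2m)`; these cells are pairwise `1 / (2m)` apart. Shortcutting an optimal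
tour to one sample point per occupied cell shows that if at least half of the `m²` cells are
occupied, the TSP length is at least `m / 4`. Otherwise some `⌊m² / 2⌋` cells are all empty.
Since the density is at least `ε₁`, any such family of cells has mass at least `ε₁ / 16`, so a
union bound over at most `2 ^ (m²)` families bounds the probability of this by
`2 ^ (m²) (1 - ε₁ / 16) ^ n ≤ exp (-ε₁ n / 32)` as soon as `m² ≤ ε₁ n / 32`.
-/

section PathLength

variable {α : Type*} [PseudoMetricSpace α]

def pathLength : List α → ℝ
  | a :: b :: l => dist a b + pathLength (b :: l)
  | _ => 0

@[simp]
lemma pathLength_singleton (a : α) : pathLength [a] = 0 := rfl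

@[simp]
lemma pathLength_cons_cons (a b : α) (l : List α) :
    pathLength (a :: b :: l) = dist a b + pathLength (b :: l) := rfl

lemma pathLength_cons_le (u a : α) {l : List α} (hl : l ≠ []) :
    pathLength (u :: l) ≤ dist u a + pathLength (a :: l) := by
  obtain ⟨b, l, rfl⟩ := List.exists_cons_of_ne_nil hl
  simp only [pathLength_cons_cons]
  linarith [dist_triangle u a b]

lemma pathLength_append_singleton_le (v w : α) {l : List α} (hl : l ≠ []) :
    pathLength (l ++ [v]) ≤ pathLength (l ++ [w]) + dist w v := by
  induction l with
  | nil => exact absurd rfl hl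
  | cons a t ih =>
    cases t with
    | nil => simpa [add_comm] using dist_triangle a w v
    | cons b t => simpa [add_assoc] using ih (List.cons_ne_nil b t)

lemma pathLength_le_of_sublist {l₁ l₂ : List α} (h : l₁.Sublist l₂) (u v : α) :
    pathLength (u :: l₁ ++ [v]) ≤ pathLength (u :: l₂ ++ [v]) := by
  induction h generalizing u with
  | slnil => rfl
  | @cons l₁ l₂ a _ ih =>
    calc pathLength (u :: l₁ ++ [v])
        ≤ dist u a + pathLength (a :: l₁ ++ [v]) := pathLength_cons_le u a (by simp)
      _ ≤ dist u a + pathLength (a :: l₂ ++ [v]) := by gcongr; exact ih a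
      _ = pathLength (u :: a :: l₂ ++ [v]) := rfl
  | @cons_cons l₁ l₂ a _ ih => simpa using ih a

end PathLength

lemma tourLength_cons (x : ℝ × ℝ) (l : List (ℝ × ℝ)) :
    tourLength (x :: l) = pathLength (x :: l ++ [x]) := by
  suffices ∀ y, (((x :: l).zip (l ++ [y])).map fun p => dist p.1 p.2).sum =
      pathLength (x :: l ++ [y]) by
    simpa [tourLength, List.rotate_cons_succ] using this x
  induction l generalizing x with
  | nil => simp
  | cons z l ih => simp [ih]

lemma tourLength_le_of_sublist {l l' : List (ℝ × ℝ)} (h : l'.Sublist l) (hl' : l' ≠ []) :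
    tourLength l' ≤ tourLength l := by
  obtain ⟨y, ys, rfl⟩ := List.exists_cons_of_ne_nil hl'
  obtain ⟨x, xs, rfl⟩ :=
    List.exists_cons_of_ne_nil (List.ne_nil_of_mem (h.subset List.mem_cons_self))
  rw [tourLength_cons, tourLength_cons]
  cases h with
  | cons_cons _ h => exact pathLength_le_of_sublist h y y
  | cons _ h =>
    -- shortcut the detour through `x`
    calc pathLength (y :: ys ++ [y])
        ≤ pathLength (y :: ys ++ [x]) + dist x y :=
          pathLength_append_singleton_le y x (List.cons_ne_nil y ys)
      _ = pathLength (x :: (y :: ys) ++ [x]) := by simp [add_comm]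
      _ ≤ pathLength (x :: xs ++ [x]) := pathLength_le_of_sublist h x x

lemma zip_rotate_one_fst_ne_snd {α : Type*} {l : List α} (hl : l.Nodup) (h2 : 2 ≤ l.length)
    {p : α × α} (hp : p ∈ l.zip (l.rotate 1)) : p.1 ≠ p.2 := by
  obtain ⟨i, hi, rfl⟩ := List.mem_iff_getElem.mp hp
  simp only [List.length_zip, List.length_rotate, min_self] at hi
  simp only [List.getElem_zip, List.getElem_rotate, ne_eq, hl.getElem_inj_iff]
  rcases Nat.lt_or_ge (i + 1) l.length with h | h
  · rw [Nat.mod_eq_of_lt h]; omega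
  · rw [show i + 1 = l.length by omega, Nat.mod_self]; omega

lemma mul_length_le_tourLength {l : List (ℝ × ℝ)} (hl : l.Nodup) (h2 : 2 ≤ l.length) {s : ℝ}
    (hs : ∀ x ∈ l, ∀ y ∈ l, x ≠ y → s ≤ dist x y) : s * l.length ≤ tourLength l := by
  have hedge : ∀ d ∈ (l.zip (l.rotate 1)).map (fun p => dist p.1 p.2), s ≤ d := by
    simp only [List.mem_map]
    rintro _ ⟨p, hp, rfl⟩
    exact hs _ (List.of_mem_zip hp).1 _ (List.mem_rotate.mp (List.of_mem_zip hp).2)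
      (zip_rotate_one_fst_ne_snd hl h2 hp)
  simpa [tourLength, mul_comm] using List.card_nsmul_le_sum _ s hedge

lemma mul_card_le_tspLength {P T : Finset (ℝ × ℝ)} (hTP : T ⊆ P) (hT : 3 ≤ #T) {s : ℝ}
    (hs : ∀ x ∈ T, ∀ y ∈ T, x ≠ y → s ≤ dist x y) : s * #T ≤ tspLength P := by
  rw [tspLength, if_neg (by linarith [card_le_card hTP])]
  refine le_csInf ⟨_, P.toList, P.nodup_toList, P.toList_toFinset, rfl⟩ ?_
  rintro _ ⟨l, hl, rfl, rfl⟩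
  -- restrict the tour to the points of `T` and shortcut the others
  have hsub : (l.filter (· ∈ T)).Sublist l := List.filter_sublist
  have hmem : ∀ x, x ∈ l.filter (· ∈ T) ↔ x ∈ T := fun x => by
    simp only [List.mem_filter, decide_eq_true_eq]
    exact ⟨And.right, fun hx => ⟨List.mem_toFinset.mp (hTP hx), hx⟩⟩
  have hlen : (l.filter (· ∈ T)).length = #T := by
    rw [← List.toFinset_card_of_nodup (hsub.nodup hl)]
    congr 1
    ext x
    simp only [List.mem_toFinset, hmem]
  calc s * #T = s * (l.filter (· ∈ T)).length := by rw [hlen]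
    _ ≤ tourLength (l.filter (· ∈ T)) :=
      mul_length_le_tourLength (hsub.nodup hl) (by omega) fun x hx y hy =>
        hs x ((hmem x).mp hx) y ((hmem y).mp hy)
    _ ≤ tourLength l := tourLength_le_of_sublist hsub (List.ne_nil_of_length_pos (by omega))

lemma measurableSet_square (c : ℝ × ℝ) (r : ℝ) : MeasurableSet (square c r) := measurableSet_Icc

lemma volume_square (c : ℝ × ℝ) (r : ℝ) :
    volume (square c r) = ENNReal.ofReal r * ENNReal.ofReal r := by
  rw [square, ← Set.Icc_prod_Icc, Measure.volume_eq_prod, Measure.prod_prod, Real.volume_Icc,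
    Real.volume_Icc, add_sub_cancel_left, add_sub_cancel_left]

def gridCell (h : ℝ) (c : ℕ × ℕ) : Set (ℝ × ℝ) := square ((c.1 : ℝ) * h, (c.2 : ℝ) * h) (h / 2)

lemma mem_gridCell {h : ℝ} {c : ℕ × ℕ} {x : ℝ × ℝ} :
    x ∈ gridCell h c ↔ x.1 ∈ Set.Icc ((c.1 : ℝ) * h) (c.1 * h + h / 2) ∧
      x.2 ∈ Set.Icc ((c.2 : ℝ) * h) (c.2 * h + h / 2) := by
  simp only [gridCell, square, Set.mem_Icc, Prod.le_def]
  tauto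

lemma half_le_abs_sub_of_mem_Icc {h u v : ℝ} (hh : 0 ≤ h) {i j : ℕ} (hij : i ≠ j)
    (hu : u ∈ Set.Icc ((i : ℝ) * h) (i * h + h / 2))
    (hv : v ∈ Set.Icc ((j : ℝ) * h) (j * h + h / 2)) : h / 2 ≤ |u - v| := by
  wlog hlt : i < j generalizing i j u v
  · rw [abs_sub_comm]
    exact this hij.symm hv hu (by omega)
  have : ((i : ℝ) + 1) * h ≤ j * h := by gcongr; exact_mod_cast hlt
  exact le_abs.mpr (Or.inr (by linarith [hu.2, hv.1]))

lemma half_le_dist_of_mem_gridCell {h : ℝ} (hh : 0 ≤ h) {c c' : ℕ × ℕ} (hcc' : c ≠ c')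
    {x y : ℝ × ℝ} (hx : x ∈ gridCell h c) (hy : y ∈ gridCell h c') : h / 2 ≤ dist x y := by
  rw [mem_gridCell] at hx hy
  rw [Prod.dist_eq, Real.dist_eq, Real.dist_eq]
  rw [Ne, Prod.ext_iff, not_and_or] at hcc'
  rcases hcc' with h1 | h2
  · exact (half_le_abs_sub_of_mem_Icc hh h1 hx.1 hy.1).trans (le_max_left _ _)
  · exact (half_le_abs_sub_of_mem_Icc hh h2 hx.2 hy.2).trans (le_max_right _ _)

lemma pairwiseDisjoint_gridCell {h : ℝ} (hh : 0 < h) (s : Set (ℕ × ℕ)) :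
    s.PairwiseDisjoint (gridCell h) := fun c _ c' _ hcc' =>
  Set.disjoint_left.mpr fun x hx hx' => by
    linarith [half_le_dist_of_mem_gridCell hh.le hcc' hx hx', dist_self x]

lemma gridCell_subset_unitSquare {h : ℝ} (hh : 0 ≤ h) {c : ℕ × ℕ}
    (hc₁ : ((c.1 : ℝ) + 1) * h ≤ 1) (hc₂ : ((c.2 : ℝ) + 1) * h ≤ 1) :
    gridCell h c ⊆ unitSquare := by
  intro x hx
  rw [mem_gridCell] at hx
  simp only [unitSquare, square, Set.mem_Icc, Prod.le_def, zero_add]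
  refine ⟨⟨?_, ?_⟩, ?_, ?_⟩ <;> nlinarith [hx.1.1, hx.1.2, hx.2.1, hx.2.2]

lemma mul_card_le_tspLength_of_occupied {P : Finset (ℝ × ℝ)} {h : ℝ} (hh : 0 < h)
    {S : Finset (ℕ × ℕ)} (hS : ∀ c ∈ S, ∃ p ∈ P, p ∈ gridCell h c) (h3 : 3 ≤ #S) :
    h / 2 * #S ≤ tspLength P := by
  choose! g hgP hg using hS
  have hinj : Set.InjOn g S := fun c hc c' hc' hcc' => by
    by_contra hne
    have := half_le_dist_of_mem_gridCell hh.le hne (hg c hc) (hg c' hc')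
    rw [hcc', dist_self] at this
    linarith
  rw [← card_image_of_injOn hinj] at h3 ⊢
  refine mul_card_le_tspLength (fun p hp => ?_) h3 fun p hp q hq hpq => ?_
  · obtain ⟨c, hc, rfl⟩ := mem_image.mp hp
    exact hgP c hc
  · obtain ⟨c, hc, rfl⟩ := mem_image.mp hp
    obtain ⟨c', hc', rfl⟩ := mem_image.mp hq
    exact half_le_dist_of_mem_gridCell hh.le (fun h => hpq (by rw [h])) (hg c hc) (hg c' hc')

lemma ofReal_mul_le_withDensity_restrict {α : Type*} [MeasurableSpace α] (μ : Measure α)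
    {S B : Set α} {f : α → ℝ} {a : ℝ} (hf : ∀ x ∈ S, a ≤ f x) (hB : MeasurableSet B)
    (hBS : B ⊆ S) :
    ENNReal.ofReal a * μ B ≤ (μ.restrict S).withDensity (fun x => ENNReal.ofReal (f x)) B := by
  rw [withDensity_apply _ hB, Measure.restrict_restrict hB, Set.inter_eq_self_of_subset_left hBS,
    ← setLIntegral_const]
  exact setLIntegral_mono' hB fun x hx => ENNReal.ofReal_le_ofReal (hf x (hBS hx))

lemma ofReal_one_sub_le_measure {Ω : Type*} [MeasurableSpace Ω] {P : Measure Ω}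
    [IsProbabilityMeasure P] {s : Set Ω} {p : ℝ} (hp : 0 ≤ p) (hs : P sᶜ ≤ ENNReal.ofReal p) :
    ENNReal.ofReal (1 - p) ≤ P s := by
  rw [ENNReal.ofReal_sub 1 hp, ENNReal.ofReal_one, tsub_le_iff_right, ← measure_univ (μ := P)]
  exact (measure_univ_le_add_compl s).trans (add_le_add_right hs _)

section IIDSamples

variable {Ω α ι : Type*} [MeasurableSpace Ω] [MeasurableSpace α] [Fintype ι] {P : Measure Ω}
  {X : ι → Ω → α} {ν : Measure α}

lemma measure_forall_notMem_eq (hXm : ∀ i, Measurable (X i)) (hind : iIndepFun X P)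
    (hlaw : ∀ i, P.map (X i) = ν) {B : Set α} (hB : MeasurableSet B) :
    P {ω | ∀ i, X i ω ∉ B} = ν Bᶜ ^ Fintype.card ι := by
  have : {ω | ∀ i, X i ω ∉ B} = ⋂ i, X i ⁻¹' Bᶜ := by ext; simp
  rw [this, hind.meas_iInter fun i => ⟨Bᶜ, hB.compl, rfl⟩]
  simp_rw [← Measure.map_apply (hXm _) hB.compl, hlaw, prod_const, card_univ]

lemma measure_many_empty_cells_le (hXm : ∀ i, Measurable (X i)) (hind : iIndepFun X P)
    (hlaw : ∀ i, P.map (X i) = ν) {κ : Type*} {A : κ → Set α} (hA : ∀ c, MeasurableSet (A c))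
    (U : Finset κ) (k : ℕ) {q : ℝ≥0∞} (hq : ∀ E ⊆ U, #E = k → ν (⋃ c ∈ E, A c)ᶜ ≤ q) :
    P {ω | k ≤ #{c ∈ U | ∀ i, X i ω ∉ A c}} ≤ (#U).choose k * q ^ Fintype.card ι := by
  have hcover : {ω | k ≤ #{c ∈ U | ∀ i, X i ω ∉ A c}} ⊆
      ⋃ E ∈ U.powersetCard k, {ω | ∀ i, X i ω ∉ ⋃ c ∈ E, A c} := by
    intro ω hω
    obtain ⟨E, hEsub, hEk⟩ := exists_subset_card_eq hω
    refine Set.mem_biUnion (mem_powersetCard.mpr ⟨hEsub.trans (filter_subset _ _), hEk⟩) ?_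
    simp only [Set.mem_ofPred_eq, Set.mem_iUnion, not_exists]
    exact fun i c hc => (mem_filter.mp (hEsub hc)).2 i
  calc P {ω | k ≤ #{c ∈ U | ∀ i, X i ω ∉ A c}}
      ≤ ∑ E ∈ U.powersetCard k, P {ω | ∀ i, X i ω ∉ ⋃ c ∈ E, A c} :=
        (measure_mono hcover).trans (measure_biUnion_finset_le _ _)
    _ ≤ ∑ _E ∈ U.powersetCard k, q ^ Fintype.card ι := by
        refine sum_le_sum fun E hE => ?_
        obtain ⟨hEU, hEk⟩ := mem_powersetCard.mp hE
        rw [measure_forall_notMem_eq hXm hind hlaw (E.measurableSet_biUnion fun c _ => hA c)]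
        gcongr
        exact hq E hEU hEk
    _ = (#U).choose k * q ^ Fintype.card ι := by rw [sum_const, card_powersetCard, nsmul_eq_mul]

end IIDSamples

def occupiedCells (m : ℕ) (P : Finset (ℝ × ℝ)) : Finset (ℕ × ℕ) :=
  {c ∈ range m ×ˢ range m | ∃ p ∈ P, p ∈ gridCell (1 / m) c}

lemma div_four_le_tspLength {m : ℕ} (hm : 3 ≤ m) {P : Finset (ℝ × ℝ)}
    (hP : m * m - m * m / 2 ≤ #(occupiedCells m P)) : (m : ℝ) / 4 ≤ tspLength P := by
  have hocc : m * m ≤ 2 * #(occupiedCells m P) := by omega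
  have htsp := mul_card_le_tspLength_of_occupied (one_div_pos.mpr (by positivity))
    (fun c hc => (mem_filter.mp hc).2) (by nlinarith : 3 ≤ #(occupiedCells m P))
  calc (m : ℝ) / 4 = 1 / m / 2 * (m * m / 2) := by field_simp; norm_num
    _ ≤ 1 / m / 2 * #(occupiedCells m P) := by
        gcongr
        rw [div_le_iff₀ two_pos, mul_comm _ (2 : ℝ)]
        exact_mod_cast hocc
    _ ≤ tspLength P := htsp

section GridOccupancy

variable {Ω ι : Type*} [MeasurableSpace Ω] [Fintype ι] {P : Measure Ω} {X : ι → Ω → ℝ × ℝ}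
  {ν : Measure (ℝ × ℝ)} [IsProbabilityMeasure ν] {ε : ℝ}

lemma measure_biUnion_gridCell_compl_le
    (hε : ∀ B ⊆ unitSquare, MeasurableSet B → ENNReal.ofReal ε * volume B ≤ ν B)
    {m : ℕ} (hm : 2 ≤ m) {E : Finset (ℕ × ℕ)} (hEU : E ⊆ range m ×ˢ range m)
    (hEk : #E = m * m / 2) :
    ν (⋃ c ∈ E, gridCell (1 / m) c)ᶜ ≤ 1 - ENNReal.ofReal (ε / 16) := by
  have hm0 : (0 : ℝ) < m := by positivity
  have hsub : ⋃ c ∈ E, gridCell (1 / m) c ⊆ unitSquare := by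
    refine Set.iUnion₂_subset fun c hc => ?_
    have hc := mem_product.mp (hEU hc)
    simp only [mem_range] at hc
    refine gridCell_subset_unitSquare (by positivity) ?_ ?_ <;>
      rw [← div_eq_mul_one_div, div_le_one hm0] <;> norm_cast <;> omega
  have hmeas : MeasurableSet (⋃ c ∈ E, gridCell (1 / m) c) :=
    E.measurableSet_biUnion fun c _ => measurableSet_square _ _
  have hvol : ENNReal.ofReal (1 / 16) ≤ volume (⋃ c ∈ E, gridCell (1 / m) c) := by
    rw [measure_biUnion_finset (pairwiseDisjoint_gridCell (by positivity) _)
      fun c _ => measurableSet_square _ _]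
    simp_rw [gridCell, volume_square]
    rw [sum_const, nsmul_eq_mul, ← ENNReal.ofReal_natCast, ← ENNReal.ofReal_mul (by positivity),
      ← ENNReal.ofReal_mul (by positivity)]
    refine ENNReal.ofReal_le_ofReal ?_
    have : (m : ℝ) * m ≤ 4 * #E := by
      have : 4 ≤ m * m := Nat.mul_le_mul hm hm
      exact_mod_cast (by omega : m * m ≤ 4 * #E)
    field_simp
    linarith
  refine prob_compl_le_one_sub_of_le_prob ?_ hmeas
  calc ENNReal.ofReal (ε / 16) = ENNReal.ofReal ε * ENNReal.ofReal (1 / 16) := by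
        rw [← ENNReal.ofReal_mul' (by norm_num), div_eq_mul_one_div]
    _ ≤ ENNReal.ofReal ε * volume (⋃ c ∈ E, gridCell (1 / m) c) := by gcongr
    _ ≤ ν (⋃ c ∈ E, gridCell (1 / m) c) := hε _ hsub hmeas

lemma measure_tspLength_lt_le (hXm : ∀ i, Measurable (X i)) (hind : iIndepFun X P)
    (hlaw : ∀ i, P.map (X i) = ν)
    (hε : ∀ B ⊆ unitSquare, MeasurableSet B → ENNReal.ofReal ε * volume B ≤ ν B)
    {m : ℕ} (hm : 3 ≤ m) :
    P {ω | tspLength (univ.image fun i => X i ω) < m / 4} ≤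
      2 ^ (m * m) * (1 - ENNReal.ofReal (ε / 16)) ^ Fintype.card ι := by
  have hU : #(range m ×ˢ range m) = m * m := by simp
  have hempty : {ω | tspLength (univ.image fun i => X i ω) < m / 4} ⊆
      {ω | m * m / 2 ≤ #{c ∈ range m ×ˢ range m | ∀ i, X i ω ∉ gridCell (1 / m) c}} := by
    intro ω hω
    by_contra hfew
    refine (not_le.mpr hω) (div_four_le_tspLength hm ?_)
    have hsplit := card_filter_add_card_filter_not (s := range m ×ˢ range m)
      fun c => ∃ p ∈ univ.image fun i => X i ω, p ∈ gridCell (1 / m) c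
    simp only [mem_image, mem_univ, true_and, exists_exists_eq_and, not_exists] at hsplit
    simp only [Set.mem_ofPred_eq, not_le] at hfew
    simp only [occupiedCells, mem_image, mem_univ, true_and, exists_exists_eq_and]
    omega
  calc P {ω | tspLength (univ.image fun i => X i ω) < m / 4}
      ≤ (#(range m ×ˢ range m)).choose (m * m / 2) *
          (1 - ENNReal.ofReal (ε / 16)) ^ Fintype.card ι :=
        (measure_mono hempty).trans <| measure_many_empty_cells_le hXm hind hlaw
          (fun c => measurableSet_square _ _) _ _
          fun E hEU hEk => measure_biUnion_gridCell_compl_le hε (by omega) hEU hEk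
    _ ≤ 2 ^ (m * m) * (1 - ENNReal.ofReal (ε / 16)) ^ Fintype.card ι := by
        gcongr
        rw [← hU]
        exact_mod_cast Nat.choose_le_two_pow _ _

end GridOccupancy

lemma two_pow_mul_one_sub_pow_le {ε : ℝ} (hε : 0 ≤ ε) {M n : ℕ} (hM : (M : ℝ) ≤ ε * n / 32) :
    2 ^ M * (1 - ENNReal.ofReal (ε / 16)) ^ n ≤ ENNReal.ofReal (Real.exp (-(ε / 32) * n)) := by
  have h2 : (2 : ℝ≥0∞) ≤ ENNReal.ofReal (Real.exp 1) := by
    rw [← ENNReal.ofReal_ofNat]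
    exact ENNReal.ofReal_le_ofReal (by linarith [Real.exp_one_gt_d9])
  have hq : 1 - ENNReal.ofReal (ε / 16) ≤ ENNReal.ofReal (Real.exp (-(ε / 16))) := by
    rw [← ENNReal.ofReal_one, ← ENNReal.ofReal_sub _ (by positivity)]
    exact ENNReal.ofReal_le_ofReal (by linarith [Real.add_one_le_exp (-(ε / 16))])
  calc 2 ^ M * (1 - ENNReal.ofReal (ε / 16)) ^ n
      ≤ ENNReal.ofReal (Real.exp 1) ^ M * ENNReal.ofReal (Real.exp (-(ε / 16))) ^ n := by
        gcongr
    _ = ENNReal.ofReal (Real.exp (M - ε * n / 16)) := by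
        rw [← ENNReal.ofReal_pow (Real.exp_pos _).le, ← ENNReal.ofReal_pow (Real.exp_pos _).le,
          ← ENNReal.ofReal_mul (by positivity), ← Real.exp_nat_mul, ← Real.exp_nat_mul,
          ← Real.exp_add]
        ring_nf
    _ ≤ ENNReal.ofReal (Real.exp (-(ε / 32) * n)) := by gcongr; linarith

lemma floor_bounds_of_four_le {x : ℝ} (hx : 4 ≤ x) :
    3 ≤ ⌊x⌋₊ ∧ x / 2 ≤ ⌊x⌋₊ ∧ ((⌊x⌋₊ * ⌊x⌋₊ : ℕ) : ℝ) ≤ x * x := by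
  have h3 : 3 ≤ ⌊x⌋₊ := Nat.le_floor (by norm_num; linarith)
  have hfloor := Nat.floor_le (by linarith : 0 ≤ x)
  refine ⟨h3, ?_, by push_cast; gcongr⟩
  linarith [Nat.lt_floor_add_one x, (by exact_mod_cast h3 : (3 : ℝ) ≤ ⌊x⌋₊)]

lemma exp_neg_mul_le_exp_neg_mul_div_log {c : ℝ} (hc : 0 ≤ c) {n : ℕ} (hn : 3 ≤ n) :
    Real.exp (-c * n) ≤ Real.exp (-c * n / Real.log n) := by
  have hn' : (3 : ℝ) ≤ n := by exact_mod_cast hn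
  have hlog : 1 ≤ Real.log n := by
    rw [Real.le_log_iff_exp_le (by positivity)]
    linarith [Real.exp_one_lt_d9]
  gcongr
  rw [le_div_iff₀ (by linarith)]
  nlinarith [(by positivity : 0 ≤ c * n)]

theorem tsp_lower_deviation_bound_general
    (Ω : Type) [MeasurableSpace Ω] (Pr : Measure Ω) [IsProbabilityMeasure Pr]
    (ε₁ ε₂ : ℝ) (hε₁ : 0 < ε₁)
    (f : ℝ × ℝ → ℝ)
    (hf : ∀ x ∈ unitSquare, ε₁ ≤ f x ∧ f x ≤ ε₂)
    (X : (n : ℕ) → Fin n → Ω → ℝ × ℝ)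
    (hXm : ∀ n i, Measurable (X n i))
    (hiid : ∀ n, iIndepFun (X n) Pr)
    (hlaw : ∀ n i, Measure.map (X n i) Pr =
      (volume.restrict unitSquare).withDensity fun x => ENNReal.ofReal (f x))
    (TSPn : (n : ℕ) → Ω → ℝ)
    (hTSPn : ∀ n ω, TSPn n ω = tspLength (Finset.univ.image fun i : Fin n => X n i ω))
    :
    ∃ θ₂ θ₃ : ℝ, 0 < θ₂ ∧ 0 < θ₃ ∧ ∀ᶠ n : ℕ in atTop,
      ENNReal.ofReal (1 - Real.exp (-θ₃ * (n : ℝ) / Real.log n)) ≤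
        Pr {ω | θ₂ * Real.sqrt n ≤ TSPn n ω} := by
  have : IsProbabilityMeasure ((volume.restrict unitSquare).withDensity
      fun x => ENNReal.ofReal (f x)) :=
    hlaw 1 0 ▸ Measure.isProbabilityMeasure_map (hXm 1 0).aemeasurable
  set a := Real.sqrt (ε₁ / 32)
  refine ⟨a / 8, ε₁ / 32, by positivity, by positivity, ?_⟩
  have hgrow : Tendsto (fun n : ℕ => a * Real.sqrt n) atTop atTop :=
    (Real.tendsto_sqrt_atTop.comp tendsto_natCast_atTop_atTop).const_mul_atTop (by positivity)
  filter_upwards [hgrow.eventually_ge_atTop 4, eventually_ge_atTop 3] with n hn hn3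
  obtain ⟨hm3, hm_lower, hm_upper⟩ := floor_bounds_of_four_le hn
  set m := ⌊a * Real.sqrt n⌋₊
  have hm_sq : ((m * m : ℕ) : ℝ) ≤ ε₁ * n / 32 := hm_upper.trans_eq <| by
    rw [mul_mul_mul_comm, Real.mul_self_sqrt (by positivity), Real.mul_self_sqrt (by positivity)]
    ring
  refine ofReal_one_sub_le_measure (Real.exp_pos _).le ?_
  calc Pr {ω | a / 8 * Real.sqrt n ≤ TSPn n ω}ᶜ
      ≤ Pr {ω | tspLength (univ.image fun i => X n i ω) < m / 4} := measure_mono fun ω hω => by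
        simp only [Set.mem_compl_iff, Set.mem_ofPred_eq, not_le, hTSPn] at hω ⊢
        linarith
    _ ≤ 2 ^ (m * m) * (1 - ENNReal.ofReal (ε₁ / 16)) ^ n := by
        simpa using measure_tspLength_lt_le (hXm n) (hiid n) (hlaw n) (fun B hBS hB =>
          ofReal_mul_le_withDensity_restrict volume (fun x hx => (hf x hx).1) hB hBS) hm3
    _ ≤ ENNReal.ofReal (Real.exp (-(ε₁ / 32) * n)) := two_pow_mul_one_sub_pow_le hε₁.le hm_sq
    _ ≤ ENNReal.ofReal (Real.exp (-(ε₁ / 32) * n / Real.log n)) :=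
        ENNReal.ofReal_le_ofReal (exp_neg_mul_le_exp_neg_mul_div_log (by positivity) hn3)

/-- Theorem 2, (1.17): `P(TSP_n >= th2 sqrt n) >= 1 - exp(-th3 n/log n)` for all large `n`. -/
theorem tsp_lower_deviation_bound
    (Ω : Type) [MeasurableSpace Ω] (Pr : Measure Ω) [IsProbabilityMeasure Pr]
    (ε₁ ε₂ : ℝ) (hε₁ : 0 < ε₁) (hε₁₂ : ε₁ ≤ ε₂)
    (f : ℝ × ℝ → ℝ) (hfm : Measurable f)
    (hf : ∀ x ∈ unitSquare, ε₁ ≤ f x ∧ f x ≤ ε₂)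
    (hf1 : ∫ x in unitSquare, f x = 1)
    (X : (n : ℕ) → Fin n → Ω → ℝ × ℝ)
    (hXm : ∀ n i, Measurable (X n i))
    (hiid : ∀ n, iIndepFun (X n) Pr)
    (hlaw : ∀ n i, Measure.map (X n i) Pr =
      (volume.restrict unitSquare).withDensity fun x => ENNReal.ofReal (f x))
    (TSPn : (n : ℕ) → Ω → ℝ)
    (hTSPn : ∀ n ω, TSPn n ω = tspLength (Finset.univ.image fun i : Fin n => X n i ω))
    :
    ∃ θ₂ θ₃ : ℝ, 0 < θ₂ ∧ 0 < θ₃ ∧ ∀ᶠ n : ℕ in atTop,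
      ENNReal.ofReal (1 - Real.exp (-θ₃ * (n : ℝ) / Real.log n)) ≤
        Pr {ω | θ₂ * Real.sqrt n ≤ TSPn n ω} :=
  tsp_lower_deviation_bound_general Ω Pr ε₁ ε₂ hε₁ f hf X hXm hiid hlaw TSPn hTSPn

end
end

section
/- Let W₁ ⊂ W₂ be concentric axis-parallel squares in ℝ² of side lengths h and 2h respectively. Let 𝒞 be a spanning cycle through a finite set P of at least 3 points in ℝ², and suppose at least q points of P lie in W₁. If no edge of 𝒞 has both of its endpoints inside W₂, then the length of 𝒞 satisfies L(𝒞) ≥ q·h/2. -/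
open MeasureTheory ProbabilityTheory Filter Finset
open scoped ENNReal Classical

noncomputable section

/-!
Each point of `W₁` is the start of the cycle edge leading to its successor. That successor lies
outside `W₂`, hence differs from the start by more than `h / 2` in some coordinate, so the edge
has length at least `h / 2` (already in the sup metric, which is below the Euclidean one).
Distinct points start distinct edges, so these edges alone contribute at least `q h / 2`.
-/

lemma square_subset_square (c : ℝ × ℝ) (r : ℝ) {d : ℝ} (hd : 0 ≤ d) :
    square c r ⊆ square (c.1 - d, c.2 - d) (r + 2 * d) :=
  Set.Icc_subset_Icc (Prod.le_def.2 ⟨by dsimp; linarith, by dsimp; linarith⟩)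
    (Prod.le_def.2 ⟨by dsimp; linarith, by dsimp; linarith⟩)

lemma le_dist_of_mem_square_of_notMem_square {c x y : ℝ × ℝ} {r d : ℝ} (hx : x ∈ square c r)
    (hy : y ∉ square (c.1 - d, c.2 - d) (r + 2 * d)) : d ≤ dist x y := by
  obtain ⟨⟨hx1, hx2⟩, hx3, hx4⟩ := hx
  simp only [square, Set.mem_Icc, Prod.le_def, not_and_or, not_le] at hy hx3 hx4
  rw [Prod.dist_eq, Real.dist_eq, Real.dist_eq]
  rcases hy with (hy | hy) | (hy | hy)
  · exact le_max_of_le_left <| (by linarith : d ≤ x.1 - y.1).trans (le_abs_self _)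
  · exact le_max_of_le_right <| (by linarith : d ≤ x.2 - y.2).trans (le_abs_self _)
  · exact le_max_of_le_left <| (by linarith : d ≤ -(x.1 - y.1)).trans (neg_le_abs _)
  · exact le_max_of_le_right <| (by linarith : d ≤ -(x.2 - y.2)).trans (neg_le_abs _)

lemma List.countP_mul_le_sum_map {β : Type*} (p : β → Bool) {c : ℝ} {f : β → ℝ} {L : List β}
    (hf₀ : ∀ b ∈ L, 0 ≤ f b) (hf : ∀ b ∈ L, p b → c ≤ f b) :
    (L.countP p : ℝ) * c ≤ (L.map f).sum := by
  induction L with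
  | nil => simp
  | cons b L ih =>
    have ih := ih (fun x hx => hf₀ x (mem_cons_of_mem _ hx))
      (fun x hx => hf x (mem_cons_of_mem _ hx))
    have hb₀ := hf₀ b mem_cons_self
    rw [countP_cons, map_cons, sum_cons]
    by_cases hb : p b
    · have hbc := hf b mem_cons_self hb
      simp only [hb, if_true]
      push_cast
      linarith
    · simp only [hb, Bool.false_eq_true, if_false]
      push_cast
      linarith

lemma List.countP_zip_rotate_fst {α : Type*} (p : α → Bool) (l : List α) (n : ℕ) :
    (l.zip (l.rotate n)).countP (fun e => p e.1) = l.countP p := by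
  conv_rhs => rw [← map_fst_zip (l₂ := l.rotate n) (length_rotate l n).ge, countP_map]
  rfl

lemma List.card_filter_toFinset_le_countP {α : Type*} [DecidableEq α] (S : α → Prop)
    [DecidablePred S] (l : List α) :
    (l.toFinset.filter S).card ≤ l.countP (fun x => decide (S x)) := by
  rw [countP_eq_length_filter]
  convert toFinset_card_le (l.filter fun x => decide (S x))
  simp only [toFinset_filter, decide_eq_true_eq]

theorem cycle_length_ge_of_no_local_edge_general
    (m : ℝ × ℝ) (h : ℝ) (hh : 0 < h)
    (P : Finset (ℝ × ℝ))
    (l : List (ℝ × ℝ)) (hsp : l.toFinset = P)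
    (q : ℕ)
    (hq : q ≤ (P.filter fun p => p ∈ square (m.1 - h / 2, m.2 - h / 2) h).card)
    (hno : ∀ p ∈ l.zip (l.rotate 1),
      ¬(p.1 ∈ square (m.1 - h, m.2 - h) (2 * h) ∧
        p.2 ∈ square (m.1 - h, m.2 - h) (2 * h))) :
    (q : ℝ) * h / 2 ≤ tourLength l := by
  set W₁ := square (m.1 - h / 2, m.2 - h / 2) h
  set W₂ := square (m.1 - h, m.2 - h) (2 * h)
  have hW₂ : W₂ = square ((m.1 - h / 2) - h / 2, (m.2 - h / 2) - h / 2) (h + 2 * (h / 2)) := by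
    simp only [W₂]
    congr 2 <;> ring
  have hW₁₂ : W₁ ⊆ W₂ := hW₂ ▸ square_subset_square _ _ (by positivity)
  have hedge : ∀ e ∈ l.zip (l.rotate 1), decide (e.1 ∈ W₁) → h / 2 ≤ dist e.1 e.2 := by
    intro e he h₁
    rw [decide_eq_true_eq] at h₁
    have h₂ : e.2 ∉ W₂ := fun h₂ => hno e he ⟨hW₁₂ h₁, h₂⟩
    exact le_dist_of_mem_square_of_notMem_square h₁ (hW₂ ▸ h₂)
  have hcount : q ≤ l.countP fun x => decide (x ∈ W₁) := by
    subst hsp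
    exact hq.trans (List.card_filter_toFinset_le_countP _ l)
  calc (q : ℝ) * h / 2 ≤ (l.countP fun x => decide (x ∈ W₁) : ℕ) * (h / 2) := by
        rw [mul_div_assoc]; gcongr
    _ = ((l.zip (l.rotate 1)).countP fun e => decide (e.1 ∈ W₁) : ℕ) * (h / 2) := by
        rw [List.countP_zip_rotate_fst (fun x => decide (x ∈ W₁))]
    _ ≤ tourLength l := List.countP_mul_le_sum_map _ (fun _ _ => dist_nonneg) hedge

/-- if at least `q` points of a spanning cycle lie in the inner square
`W₁` (side `h`) and no edge of the cycle has both endpoints in the concentric square `W₂`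
(side `2h`), then the cycle has length at least `q h / 2`. -/
theorem cycle_length_ge_of_no_local_edge
    (m : ℝ × ℝ) (h : ℝ) (hh : 0 < h)
    (P : Finset (ℝ × ℝ)) (hcard : 3 ≤ P.card)
    (l : List (ℝ × ℝ)) (hnd : l.Nodup) (hsp : l.toFinset = P)
    (q : ℕ)
    (hq : q ≤ (P.filter fun p => p ∈ square (m.1 - h / 2, m.2 - h / 2) h).card)
    (hno : ∀ p ∈ l.zip (l.rotate 1),
      ¬(p.1 ∈ square (m.1 - h, m.2 - h) (2 * h) ∧
        p.2 ∈ square (m.1 - h, m.2 - h) (2 * h))) :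
    (q : ℝ) * h / 2 ≤ tourLength l :=
  cycle_length_ge_of_no_local_edge_general m h hh P l hsp q hq hno

end
end

section
/- Let n ≥ 3 be an integer, 1 ≤ k ≤ n, and 0 < p < 1/2. Then the binomial probability B(k;n,p) = C(n,k) p^k (1−p)^{n−k} and the Poisson probability Poi(k;np) = e^{−np}(np)^k/k! satisfy: (i) B(k;n,p) ≤ Poi(k;np)·e^{kp}; and (ii) B(k;n,p) ≥ Poi(k;np)·(1 − k²/n)·e^{kp − np²}. -/
lemma weier_prod_aux (f : ℕ → ℝ) : ∀ (k : ℕ), (∀ i < k, 0 ≤ f i) → (∀ i < k, f i ≤ 1) →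
    1 - ∑ i ∈ Finset.range k, f i ≤ ∏ i ∈ Finset.range k, (1 - f i) := by
  intro k
  induction k with
  | zero => simp
  | succ m ih =>
    intro h0 h1
    rw [Finset.sum_range_succ, Finset.prod_range_succ]
    have H := ih (fun i hi => h0 i (hi.trans (Nat.lt_succ_self m)))
      (fun i hi => h1 i (hi.trans (Nat.lt_succ_self m)))
    have hs : 0 ≤ ∑ i ∈ Finset.range m, f i :=
      Finset.sum_nonneg fun i hi => h0 i ((Finset.mem_range.mp hi).trans (Nat.lt_succ_self m))
    have hfm0 := h0 m (Nat.lt_succ_self m)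
    have hfm1 := h1 m (Nat.lt_succ_self m)
    nlinarith [mul_le_mul_of_nonneg_right H (by linarith : (0:ℝ) ≤ 1 - f m),
      mul_nonneg hs hfm0]

/-- property (c1): comparison of the binomial point probability
`B(k;n,p) = C(n,k) p^k (1-p)^(n-k)` with the Poisson point probability
`Poi(k;np) = e^(-np) (np)^k / k!`. -/
theorem binomial_poisson_pointwise_comparison
    (n k : ℕ) (hn : 3 ≤ n) (hk1 : 1 ≤ k) (hkn : k ≤ n)
    (p : ℝ) (hp : 0 < p) (hp2 : p < 1 / 2) :
    ((n.choose k : ℝ) * p ^ k * (1 - p) ^ (n - k) ≤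
      Real.exp (-((n : ℝ) * p)) * ((n : ℝ) * p) ^ k / (Nat.factorial k : ℝ) *
        Real.exp ((k : ℝ) * p)) ∧
    (Real.exp (-((n : ℝ) * p)) * ((n : ℝ) * p) ^ k / (Nat.factorial k : ℝ) *
        (1 - (k : ℝ) ^ 2 / n) * Real.exp ((k : ℝ) * p - (n : ℝ) * p ^ 2) ≤
      (n.choose k : ℝ) * p ^ k * (1 - p) ^ (n - k)) := by
  have hn0 : (0:ℝ) < n := by positivity
  have hF : (0:ℝ) < (Nat.factorial k : ℝ) := by exact_mod_cast Nat.factorial_pos k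
  have h1p : (0:ℝ) ≤ 1 - p := by linarith
  have hm : ((n - k : ℕ) : ℝ) = (n:ℝ) - k := by exact Nat.cast_sub hkn
  -- descending factorial identity
  have hP : (Nat.factorial k : ℝ) * (n.choose k : ℝ) = ∏ i ∈ Finset.range k, ((n:ℝ) - i) := by
    have h1 : (n.descFactorial k : ℝ) = (Nat.factorial k : ℝ) * (n.choose k : ℝ) := by
      exact_mod_cast congrArg (Nat.cast : ℕ → ℝ) (Nat.descFactorial_eq_factorial_mul_choose n k)
    have h2 : (n.descFactorial k : ℝ) = ∏ i ∈ Finset.range k, ((n:ℝ) - i) := by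
      rw [Nat.descFactorial_eq_prod_range, Nat.cast_prod]
      refine Finset.prod_congr rfl fun i hi => ?_
      have : i ≤ n := le_trans (Finset.mem_range.mp hi).le hkn
      exact Nat.cast_sub this
    rw [← h1, h2]
  -- upper bound on descending factorial
  have hPle : (Nat.factorial k : ℝ) * (n.choose k : ℝ) ≤ (n:ℝ)^k := by
    have := Nat.descFactorial_le_pow n k
    rw [Nat.descFactorial_eq_factorial_mul_choose] at this
    exact_mod_cast this
  -- lower bound on descending factorial
  have hPge : (n:ℝ)^k * (1 - (k:ℝ)^2 / n) ≤ (Nat.factorial k : ℝ) * (n.choose k : ℝ) := by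
    rw [hP]
    have hfac : ∀ i ∈ Finset.range k, (n:ℝ) - i = (n:ℝ) * (1 - (i:ℝ)/n) := by
      intro i _; field_simp
    rw [Finset.prod_congr rfl hfac, Finset.prod_mul_distrib, Finset.prod_const,
      Finset.card_range]
    have hW : 1 - ∑ i ∈ Finset.range k, ((i:ℝ)/n) ≤ ∏ i ∈ Finset.range k, (1 - (i:ℝ)/n) := by
      apply weier_prod_aux
      · intro i _; positivity
      · intro i hi
        have : (i:ℝ) ≤ n := by exact_mod_cast le_trans hi.le hkn
        rw [div_le_one hn0]; exact this
    have hsum : ∑ i ∈ Finset.range k, ((i:ℝ)/n) ≤ (k:ℝ)^2 / n := by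
      rw [← Finset.sum_div, div_le_div_iff_of_pos_right hn0]
      calc ∑ i ∈ Finset.range k, (i:ℝ) ≤ ∑ _i ∈ Finset.range k, (k:ℝ) := by
            refine Finset.sum_le_sum fun i hi => ?_
            exact_mod_cast (Finset.mem_range.mp hi).le
        _ = (k:ℝ) * k := by rw [Finset.sum_const, Finset.card_range]; ring
        _ = (k:ℝ)^2 := by ring
    have := le_trans (by linarith : 1 - (k:ℝ)^2/n ≤ 1 - ∑ i ∈ Finset.range k, ((i:ℝ)/n)) hW
    exact mul_le_mul_of_nonneg_left this (by positivity)
  have hch1 : (n.choose k : ℝ) ≤ (n:ℝ)^k / (Nat.factorial k : ℝ) := by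
    rw [le_div_iff₀ hF]; linarith
  constructor
  · -- upper bound
    have h2 : (1 - p) ^ (n - k) ≤ Real.exp (-((n:ℝ)*p) + (k:ℝ)*p) := by
      calc (1 - p) ^ (n - k) ≤ (Real.exp (-p)) ^ (n - k) := by
            apply pow_le_pow_left₀ h1p
            linarith [Real.add_one_le_exp (-p)]
        _ = Real.exp (((n - k : ℕ):ℝ) * (-p)) := by rw [← Real.exp_nat_mul]
        _ = Real.exp (-((n:ℝ)*p) + (k:ℝ)*p) := by rw [hm]; ring_nf
    calc (n.choose k : ℝ) * p ^ k * (1 - p) ^ (n - k)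
        ≤ ((n:ℝ)^k / (Nat.factorial k : ℝ) * p ^ k) * Real.exp (-((n:ℝ)*p) + (k:ℝ)*p) := by
          apply mul_le_mul (mul_le_mul_of_nonneg_right hch1 (by positivity)) h2
            (pow_nonneg h1p _) (by positivity)
      _ = Real.exp (-((n : ℝ) * p)) * ((n : ℝ) * p) ^ k / (Nat.factorial k : ℝ) *
          Real.exp ((k : ℝ) * p) := by rw [Real.exp_add]; ring
  · -- lower bound
    rcases le_or_gt (1 - (k:ℝ)^2 / n) 0 with hc | hc
    · have hL : Real.exp (-((n : ℝ) * p)) * ((n : ℝ) * p) ^ k / (Nat.factorial k : ℝ) *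
          (1 - (k : ℝ) ^ 2 / n) * Real.exp ((k : ℝ) * p - (n : ℝ) * p ^ 2) ≤ 0 := by
        apply mul_nonpos_of_nonpos_of_nonneg _ (Real.exp_pos _).le
        exact mul_nonpos_of_nonneg_of_nonpos (by positivity) hc
      have hR : (0:ℝ) ≤ (n.choose k : ℝ) * p ^ k * (1 - p) ^ (n - k) := by
        apply mul_nonneg (by positivity) (pow_nonneg h1p _)
      linarith
    · -- key: exp(-(p+p^2)) ≤ 1 - p
      have hq := Real.quadratic_le_exp_of_nonneg (x := p + p^2) (by positivity)
      have hmul : 1 ≤ (1 - p) * Real.exp (p + p^2) := by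
        calc (1:ℝ) ≤ (1 - p) * (1 + (p + p^2) + (p + p^2)^2 / 2) := by nlinarith
          _ ≤ (1 - p) * Real.exp (p + p^2) := mul_le_mul_of_nonneg_left hq h1p
      have hkey : Real.exp (-(p + p^2)) ≤ 1 - p := by
        have hprod : Real.exp (-(p + p^2)) * Real.exp (p + p^2) = 1 := by
          rw [← Real.exp_add, show -(p+p^2)+(p+p^2) = 0 by ring, Real.exp_zero]
        nlinarith [Real.exp_pos (p + p^2), Real.exp_pos (-(p + p^2))]
      have h2' : Real.exp (-((n:ℝ)*p) - (n:ℝ)*p^2 + (k:ℝ)*p) ≤ (1 - p) ^ (n - k) := by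
        calc Real.exp (-((n:ℝ)*p) - (n:ℝ)*p^2 + (k:ℝ)*p)
            ≤ Real.exp (((n - k : ℕ):ℝ) * (-(p + p^2))) := by
              apply Real.exp_le_exp.mpr
              rw [hm]
              have hk0 : (1:ℝ) ≤ (k:ℝ) := by exact_mod_cast hk1
              nlinarith [sq_nonneg p]
          _ = (Real.exp (-(p + p^2))) ^ (n - k) := Real.exp_nat_mul _ _
          _ ≤ (1 - p) ^ (n - k) := pow_le_pow_left₀ (Real.exp_pos _).le hkey _
      have hch2 : (n:ℝ)^k / (Nat.factorial k : ℝ) * (1 - (k:ℝ)^2 / n) ≤ (n.choose k : ℝ) := by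
        rw [div_mul_eq_mul_div, div_le_iff₀ hF]
        linarith
      have hexp : Real.exp (-((n:ℝ) * p)) * Real.exp ((k : ℝ) * p - (n : ℝ) * p ^ 2) =
          Real.exp (-((n:ℝ)*p) - (n:ℝ)*p^2 + (k:ℝ)*p) := by
        rw [← Real.exp_add]; ring_nf
      calc Real.exp (-((n : ℝ) * p)) * ((n : ℝ) * p) ^ k / (Nat.factorial k : ℝ) *
            (1 - (k : ℝ) ^ 2 / n) * Real.exp ((k : ℝ) * p - (n : ℝ) * p ^ 2)
          = ((n:ℝ)^k / (Nat.factorial k : ℝ) * (1 - (k:ℝ)^2 / n) * p ^ k) *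
              Real.exp (-((n:ℝ)*p) - (n:ℝ)*p^2 + (k:ℝ)*p) := by
            rw [← hexp]; ring
        _ ≤ ((n.choose k : ℝ) * p ^ k) * (1 - p) ^ (n - k) := by
            apply mul_le_mul (mul_le_mul_of_nonneg_right hch2 (by positivity)) h2'
              (Real.exp_pos _).le (by positivity)
        _ = (n.choose k : ℝ) * p ^ k * (1 - p) ^ (n - k) := by ring
end

section
/- Let n ≥ 3 be an integer, let k₁, k₂ ≥ 1 be integers with k₁ + k₂ ≤ n, and let p₁, p₂ > 0 with p₁ + p₂ < 1/2. Then the multinomial probability B(k₁,k₂;n,p₁,p₂) = (n!/(k₁!k₂!(n−k₁−k₂)!)) p₁^{k₁} p₂^{k₂} (1−p₁−p₂)^{n−k₁−k₂} satisfies: (i) B(k₁,k₂;n,p₁,p₂) ≤ Poi(k₁;np₁)·Poi(k₂;np₂)·e^{(p₁+p₂)(k₁+k₂)}; and (ii) B(k₁,k₂;n,p₁,p₂) ≥ Poi(k₁;np₁)·Poi(k₂;np₂)·(1 − (k₁+k₂)²/n)·e^{−n(p₁+p₂)²}. -/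
private lemma exp_lb_one_sub (p : ℝ) (hp : 0 < p) (hp2 : p < 1/2) :
    Real.exp (-(p + p^2)) ≤ 1 - p := by
  have h := Real.quadratic_le_exp_of_nonneg (x := p + p^2) (by positivity)
  rw [Real.exp_neg]
  rw [inv_le_iff_one_le_mul₀ (Real.exp_pos _)]
  nlinarith [h, hp, hp2, Real.exp_pos (p + p^2)]

private lemma desc_lb (n : ℕ) : ∀ k : ℕ, k ≤ n →
    (n : ℝ)^k * (1 - (k:ℝ)^2 / n) ≤ (n.descFactorial k : ℝ)
  | 0, _ => by simp
  | (k+1), hk => by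
    have hn : 0 < n := by omega
    have hN : (0:ℝ) < n := by exact_mod_cast hn
    have hkn : (k : ℝ) ≤ n := by exact_mod_cast (by omega : k ≤ n)
    rcases le_or_gt (1 - ((k+1 : ℕ):ℝ)^2 / n) 0 with h | h
    · calc (n:ℝ)^(k+1) * (1 - ((k+1:ℕ):ℝ)^2/n) ≤ 0 :=
            mul_nonpos_of_nonneg_of_nonpos (by positivity) h
        _ ≤ _ := by positivity
    · have ih := desc_lb n k (by omega)
      have hpos : (0:ℝ) < 1 - (k:ℝ)^2 / n := by
        push_cast at h ⊢
        have : ((k:ℝ)+1)^2 / n < 1 := by linarith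
        have hk2 : (k:ℝ)^2 ≤ ((k:ℝ)+1)^2 := by nlinarith [Nat.cast_nonneg (α := ℝ) k]
        have : (k:ℝ)^2 / n ≤ ((k:ℝ)+1)^2 / n := by gcongr
        linarith
      rw [Nat.descFactorial_succ]
      push_cast [Nat.cast_sub (by omega : k ≤ n)]
      calc (n:ℝ)^(k+1) * (1 - ((k:ℝ)+1)^2/n)
          ≤ ((n:ℝ) - k) * ((n:ℝ)^k * (1 - (k:ℝ)^2/n)) := by
            have expand : (n:ℝ)^(k+1) * (1 - ((k:ℝ)+1)^2/n)
                = (n:ℝ)^k * (n * (1 - ((k:ℝ)+1)^2/n)) := by ring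
            have expand2 : ((n:ℝ) - k) * ((n:ℝ)^k * (1 - (k:ℝ)^2/n))
                = (n:ℝ)^k * (((n:ℝ) - k) * (1 - (k:ℝ)^2/n)) := by ring
            rw [expand, expand2]
            have hkey : (n:ℝ) * (1 - ((k:ℝ)+1)^2/n) ≤ ((n:ℝ) - k) * (1 - (k:ℝ)^2/n) := by
              rw [mul_sub, mul_div_cancel₀ _ hN.ne', sub_mul, mul_sub, mul_div_cancel₀ _ hN.ne']
              have : (0:ℝ) ≤ (k:ℝ)^3 / n := by positivity
              have hc : (k:ℝ) * ((k:ℝ)^2/n) = (k:ℝ)^3 / n := by ring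
              nlinarith [Nat.cast_nonneg (α := ℝ) k]
            exact mul_le_mul_of_nonneg_left hkey (by positivity)
        _ ≤ ((n:ℝ) - k) * (n.descFactorial k : ℝ) := by
            exact mul_le_mul_of_nonneg_left ih (by linarith)

/-- property (c2): comparison of the multinomial point probability
`B(k₁,k₂;n,p₁,p₂)` with the product of two Poisson point probabilities. -/
theorem multinomial_poisson_pointwise_comparison
    (n k₁ k₂ : ℕ) (hn : 3 ≤ n) (hk₁ : 1 ≤ k₁) (hk₂ : 1 ≤ k₂) (hsum : k₁ + k₂ ≤ n)
    (p₁ p₂ : ℝ) (hp₁ : 0 < p₁) (hp₂ : 0 < p₂) (hps : p₁ + p₂ < 1 / 2) :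
    ((Nat.factorial n : ℝ) /
        ((Nat.factorial k₁ : ℝ) * (Nat.factorial k₂ : ℝ) *
          (Nat.factorial (n - k₁ - k₂) : ℝ)) *
        p₁ ^ k₁ * p₂ ^ k₂ * (1 - p₁ - p₂) ^ (n - k₁ - k₂) ≤
      (Real.exp (-((n : ℝ) * p₁)) * ((n : ℝ) * p₁) ^ k₁ / (Nat.factorial k₁ : ℝ)) *
        (Real.exp (-((n : ℝ) * p₂)) * ((n : ℝ) * p₂) ^ k₂ / (Nat.factorial k₂ : ℝ)) *
        Real.exp ((p₁ + p₂) * ((k₁ : ℝ) + (k₂ : ℝ)))) ∧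
    ((Real.exp (-((n : ℝ) * p₁)) * ((n : ℝ) * p₁) ^ k₁ / (Nat.factorial k₁ : ℝ)) *
        (Real.exp (-((n : ℝ) * p₂)) * ((n : ℝ) * p₂) ^ k₂ / (Nat.factorial k₂ : ℝ)) *
        (1 - ((k₁ : ℝ) + (k₂ : ℝ)) ^ 2 / n) * Real.exp (-(n : ℝ) * (p₁ + p₂) ^ 2) ≤
      (Nat.factorial n : ℝ) /
        ((Nat.factorial k₁ : ℝ) * (Nat.factorial k₂ : ℝ) *
          (Nat.factorial (n - k₁ - k₂) : ℝ)) *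
        p₁ ^ k₁ * p₂ ^ k₂ * (1 - p₁ - p₂) ^ (n - k₁ - k₂)) := by
  set k := k₁ + k₂ with hk
  have hmm : n - k₁ - k₂ = n - k := by omega
  set m := n - k with hm
  set p := p₁ + p₂ with hp
  have hkn : k ≤ n := hsum
  have hppos : 0 < p := by positivity
  have hq : 0 < 1 - p₁ - p₂ := by linarith
  have hmn : (m : ℝ) = (n : ℝ) - k := by
    rw [hm]; push_cast [Nat.cast_sub hkn]; ring
  have hfac : (n.factorial : ℝ) = (m.factorial : ℝ) * (n.descFactorial k : ℝ) := by
    rw [hm, ← Nat.cast_mul, Nat.factorial_mul_descFactorial hkn]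
  have hmfacpos : (0:ℝ) < (m.factorial : ℝ) := by exact_mod_cast m.factorial_pos
  have hk1pos : (0:ℝ) < (k₁.factorial : ℝ) := by exact_mod_cast k₁.factorial_pos
  have hk2pos : (0:ℝ) < (k₂.factorial : ℝ) := by exact_mod_cast k₂.factorial_pos
  -- rewrite the multinomial part
  have hB : (Nat.factorial n : ℝ) /
        ((Nat.factorial k₁ : ℝ) * (Nat.factorial k₂ : ℝ) *
          (Nat.factorial (n - k₁ - k₂) : ℝ)) *
        p₁ ^ k₁ * p₂ ^ k₂ * (1 - p₁ - p₂) ^ (n - k₁ - k₂)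
      = (p₁ ^ k₁ * p₂ ^ k₂ / ((k₁.factorial : ℝ) * (k₂.factorial : ℝ))) *
        ((n.descFactorial k : ℝ) * (1 - p) ^ m) := by
    rw [hmm, hfac]
    have : (1 : ℝ) - p = 1 - p₁ - p₂ := by rw [hp]; ring
    rw [this]
    field_simp
  have hC : (0:ℝ) < p₁ ^ k₁ * p₂ ^ k₂ / ((k₁.factorial : ℝ) * (k₂.factorial : ℝ)) := by
    positivity
  constructor
  · -- upper bound
    have hPR : (Real.exp (-((n : ℝ) * p₁)) * ((n : ℝ) * p₁) ^ k₁ / (Nat.factorial k₁ : ℝ)) *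
        (Real.exp (-((n : ℝ) * p₂)) * ((n : ℝ) * p₂) ^ k₂ / (Nat.factorial k₂ : ℝ)) *
        Real.exp ((p₁ + p₂) * ((k₁ : ℝ) + (k₂ : ℝ)))
        = (p₁ ^ k₁ * p₂ ^ k₂ / ((k₁.factorial : ℝ) * (k₂.factorial : ℝ))) *
          ((n:ℝ)^k * (Real.exp (-((n:ℝ) * p)) * Real.exp (p * k))) := by
      rw [mul_pow, mul_pow]
      have he : Real.exp (-((n : ℝ) * p₁)) * Real.exp (-((n : ℝ) * p₂))
          = Real.exp (-((n:ℝ) * p)) := by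
        rw [← Real.exp_add]; congr 1; rw [hp]; ring
      have he2 : (p₁ + p₂) * ((k₁ : ℝ) + (k₂ : ℝ)) = p * (k : ℝ) := by
        rw [hp, hk]; push_cast; ring
      rw [he2, ← he, hk, pow_add]
      push_cast
      field_simp
    rw [hB, hPR]
    apply mul_le_mul_of_nonneg_left _ hC.le
    -- descFactorial * q^m ≤ n^k * exp(-np) * exp(pk)
    have h1 : (n.descFactorial k : ℝ) ≤ (n:ℝ)^k := by
      exact_mod_cast Nat.descFactorial_le_pow n k
    have h2 : (1 - p) ^ m ≤ Real.exp (-p) ^ m := by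
      apply pow_le_pow_left₀ (by linarith)
      linarith [Real.add_one_le_exp (-p)]
    have h3 : Real.exp (-p) ^ m = Real.exp (-((n:ℝ)*p)) * Real.exp (p * k) := by
      rw [← Real.exp_nat_mul, ← Real.exp_add]
      congr 1
      rw [hmn]; ring
    calc (n.descFactorial k : ℝ) * (1 - p) ^ m
        ≤ (n:ℝ)^k * Real.exp (-p) ^ m := by
          apply mul_le_mul h1 h2 (pow_nonneg (by linarith) m) (by positivity)
      _ = (n:ℝ)^k * (Real.exp (-((n:ℝ)*p)) * Real.exp (p * k)) := by rw [h3]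
  · -- lower bound
    have hPL : (Real.exp (-((n : ℝ) * p₁)) * ((n : ℝ) * p₁) ^ k₁ / (Nat.factorial k₁ : ℝ)) *
        (Real.exp (-((n : ℝ) * p₂)) * ((n : ℝ) * p₂) ^ k₂ / (Nat.factorial k₂ : ℝ)) *
        (1 - ((k₁ : ℝ) + (k₂ : ℝ)) ^ 2 / n) * Real.exp (-(n : ℝ) * (p₁ + p₂) ^ 2)
        = (p₁ ^ k₁ * p₂ ^ k₂ / ((k₁.factorial : ℝ) * (k₂.factorial : ℝ))) *
          ((n:ℝ)^k * Real.exp (-((n:ℝ) * p)) * (1 - (k:ℝ)^2/n) *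
            Real.exp (-(n:ℝ) * p^2)) := by
      rw [mul_pow, mul_pow]
      have he : Real.exp (-((n : ℝ) * p₁)) * Real.exp (-((n : ℝ) * p₂))
          = Real.exp (-((n:ℝ) * p)) := by
        rw [← Real.exp_add]; congr 1; rw [hp]; ring
      have hkc : ((k₁ : ℝ) + (k₂ : ℝ)) = (k : ℝ) := by rw [hk]; push_cast; ring
      rw [hkc, ← he, hk, pow_add]
      push_cast
      field_simp
      ring
    rw [hB, hPL]
    apply mul_le_mul_of_nonneg_left _ hC.le
    -- n^k exp(-np) (1-k²/n) exp(-np²) ≤ descFactorial * q^m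
    rcases le_or_gt (1 - (k:ℝ)^2/n) 0 with hneg | hposq
    · have : (n:ℝ)^k * Real.exp (-((n:ℝ) * p)) * (1 - (k:ℝ)^2/n) *
            Real.exp (-(n:ℝ) * p^2) ≤ 0 := by
        apply mul_nonpos_of_nonpos_of_nonneg _ (Real.exp_pos _).le
        exact mul_nonpos_of_nonneg_of_nonpos (by positivity) hneg
      exact this.trans (mul_nonneg (Nat.cast_nonneg _) (pow_nonneg (by linarith) m))
    · have h1 : (n:ℝ)^k * (1 - (k:ℝ)^2/n) ≤ (n.descFactorial k : ℝ) := desc_lb n k hkn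
      have h2 : Real.exp (-((n:ℝ) * p)) * Real.exp (-(n:ℝ) * p^2) ≤ (1 - p) ^ m := by
        have hexp : Real.exp (-(p + p^2)) ^ m ≤ (1 - p) ^ m := by
          apply pow_le_pow_left₀ (Real.exp_pos _).le
          exact exp_lb_one_sub p hppos hps
        refine le_trans ?_ hexp
        rw [← Real.exp_nat_mul, ← Real.exp_add]
        apply Real.exp_le_exp.mpr
        clear hB hPL hC
        rw [hmn]
        have hmlen : (m:ℝ) ≤ n := by rw [hmn]; have : (0:ℝ) ≤ k := Nat.cast_nonneg k; linarith
        have hk0 : (0:ℝ) ≤ (k:ℝ) := Nat.cast_nonneg k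
        nlinarith [mul_nonneg hk0 hppos.le, mul_nonneg hk0 (sq_nonneg p)]
      calc (n:ℝ)^k * Real.exp (-((n:ℝ) * p)) * (1 - (k:ℝ)^2/n) * Real.exp (-(n:ℝ) * p^2)
          = ((n:ℝ)^k * (1 - (k:ℝ)^2/n)) *
            (Real.exp (-((n:ℝ) * p)) * Real.exp (-(n:ℝ) * p^2)) := by ring
        _ ≤ (n.descFactorial k : ℝ) * (1 - p) ^ m := by
            apply mul_le_mul h1 h2 (mul_pos (Real.exp_pos _) (Real.exp_pos _)).le (Nat.cast_nonneg _)
end
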